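/- The α-countable fractal operator F^α_B : C(I, K(ℝ)) → C(I, K(ℝ)), mapping Φ to its fractal function Φ^α, is Lipschitz continuous with Lipschitz constant 1/(1 − |α|): for all Φ, Ψ ∈ C(I, K(ℝ)), sup_{t∈I} H_d(Φ^α(t), Ψ^α(t)) ≤ (1/(1−|α|)) · sup_{t∈I} H_d(Φ(t), Ψ(t)). In particular, F^α_B is continuous. -/

import Mathlib

/-!
The Hausdorff distance is subadditive under Minkowski sums, scales by `|α|` under `α • ·`, and
does not increase when the same set is subtracted from both arguments. Applied to the
self-referential equations on the piece `[p n, p (n + 1)]`, this gives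
`d(Φα t, Ψα t) ≤ d(Φ t, Ψ t) + |α| S`, where `S` is the supremum of `d(Φα, Ψα)` over `[a, T]`.
The pieces cover `[a, T)`, and continuity carries the bound to `T`; taking suprema,
`S ≤ M + |α| S` with `M` the supremum of `d(Φ, Ψ)`, which is the claim since `|α| < 1`.
-/

open Set Metric Pointwise TopologicalSpace Filter Topology

section HausdorffPointwise

variable {E : Type*} [SeminormedAddCommGroup E]

theorem infEDist_add_add_le (x y : E) (s t : Set E) :
    infEDist (x + y) (s + t) ≤ infEDist x s + infEDist y t :=
  ENNReal.le_iInf_add_iInf fun u v => ENNReal.le_iInf_add_iInf fun hu hv =>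
    (infEDist_le_edist_of_mem (add_mem_add hu hv)).trans (edist_add_add_le x y u v)

theorem hausdorffEDist_add_add_le (s t s' t' : Set E) :
    hausdorffEDist (s + t) (s' + t') ≤ hausdorffEDist s s' + hausdorffEDist t t' := by
  have half : ∀ s t s' t' : Set E, ∀ z ∈ s + t,
      infEDist z (s' + t') ≤ hausdorffEDist s s' + hausdorffEDist t t' := by
    rintro s t s' t' _ ⟨x, hx, y, hy, rfl⟩
    exact (infEDist_add_add_le x y s' t').trans <|
      add_le_add (infEDist_le_hausdorffEDist_of_mem hx) (infEDist_le_hausdorffEDist_of_mem hy)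
  refine hausdorffEDist_le_of_infEDist (half s t s' t') fun z hz => ?_
  rw [hausdorffEDist_comm, hausdorffEDist_comm (s := t)]
  exact half s' t' s t z hz

theorem hausdorffEDist_sub_right_le (s t u : Set E) :
    hausdorffEDist (s - u) (t - u) ≤ hausdorffEDist s t := by
  simpa [sub_eq_add_neg, hausdorffEDist_self] using hausdorffEDist_add_add_le s (-u) t (-u)

theorem hausdorffEDist_smul₀_le {𝕜 : Type*} [NormedDivisionRing 𝕜] [Module 𝕜 E]
    [NormSMulClass 𝕜 E] (c : 𝕜) {s t : Set E} (hs : s.Nonempty) (ht : t.Nonempty) :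
    hausdorffEDist (c • s) (c • t) ≤ ‖c‖ₑ * hausdorffEDist s t := by
  rcases eq_or_ne c 0 with rfl | hc
  · simp [zero_smul_set hs, zero_smul_set ht, hausdorffEDist_self]
  have half : ∀ s t : Set E, ∀ z ∈ c • s, infEDist z (c • t) ≤ ‖c‖ₑ * hausdorffEDist s t := by
    rintro s t _ ⟨x, hx, rfl⟩
    rw [infEDist_smul₀ hc, ENNReal.smul_def, smul_eq_mul]
    exact mul_le_mul_right (infEDist_le_hausdorffEDist_of_mem hx) _
  refine hausdorffEDist_le_of_infEDist (half s t) fun z hz => ?_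
  rw [hausdorffEDist_comm]
  exact half t s z hz

end HausdorffPointwise

theorem NonemptyCompacts.dist_le_of_coe_eq_add_smul_sub {E 𝕜 : Type*} [NormedAddCommGroup E]
    [NormedDivisionRing 𝕜] [Module 𝕜 E] [NormSMulClass 𝕜 E] {c : 𝕜}
    {X Y A B C D K : NonemptyCompacts E}
    (hX : (X : Set E) = A + c • ((C : Set E) - (K : Set E)))
    (hY : (Y : Set E) = B + c • ((D : Set E) - (K : Set E))) :
    dist X Y ≤ dist A B + ‖c‖ * dist C D := by
  have hedist : edist X Y ≤ edist A B + ‖c‖ₑ * edist C D :=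
    calc hausdorffEDist (X : Set E) Y
        ≤ hausdorffEDist (A : Set E) B
          + hausdorffEDist (c • ((C : Set E) - (K : Set E))) (c • ((D : Set E) - (K : Set E))) := by
          rw [hX, hY]; exact hausdorffEDist_add_add_le _ _ _ _
      _ ≤ hausdorffEDist (A : Set E) B + ‖c‖ₑ * hausdorffEDist (C : Set E) D := by
          gcongr
          exact (hausdorffEDist_smul₀_le c (C.nonempty.sub K.nonempty)
            (D.nonempty.sub K.nonempty)).trans (mul_le_mul_right (hausdorffEDist_sub_right_le ..) _)
  rwa [edist_dist, edist_dist, edist_dist, ← ofReal_norm, ← ENNReal.ofReal_mul (norm_nonneg c),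
    ← ENNReal.ofReal_add dist_nonneg (by positivity),
    ENNReal.ofReal_le_ofReal_iff (by positivity)] at hedist

theorem exists_mem_Ico_succ_of_le_of_lt {α : Type*} [LinearOrder α] {p : ℕ → α} {t : α}
    (h0 : p 0 ≤ t) (hex : ∃ N, t < p N) : ∃ n, t ∈ Ico (p n) (p (n + 1)) := by
  rcases hN : Nat.find hex with _ | n
  · exact absurd (hN ▸ Nat.find_spec hex) (not_lt_of_ge h0)
  · refine ⟨n, not_lt.1 (Nat.find_min hex ?_), hN ▸ Nat.find_spec hex⟩
    omega

theorem Monotone.Icc_subset_Icc_zero_of_tendsto {α : Type*} [Preorder α] [TopologicalSpace α]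
    [OrderClosedTopology α] {p : ℕ → α} {T : α} (hp : Monotone p) (hpT : Tendsto p atTop (𝓝 T))
    (m n : ℕ) : Icc (p m) (p n) ⊆ Icc (p 0) T :=
  Icc_subset_Icc (hp (Nat.zero_le m)) (hp.ge_of_tendsto hpT n)

theorem le_of_forall_mem_Icc_succ {a T c : ℝ} {p : ℕ → ℝ} (hp : Monotone p) (hpa : p 0 = a)
    (hpT : Tendsto p atTop (𝓝 T)) {g : ℝ → ℝ} (hg : ContinuousOn g (Icc a T))
    (hpieces : ∀ n, ∀ t ∈ Icc (p n) (p (n + 1)), g t ≤ c) : ∀ t ∈ Icc a T, g t ≤ c := by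
  rintro t ⟨hat, htT⟩
  rcases htT.lt_or_eq with htT | rfl
  · obtain ⟨n, hn⟩ := exists_mem_Ico_succ_of_le_of_lt (hpa ▸ hat)
      (hpT.eventually (eventually_gt_nhds htT)).exists
    exact hpieces n t (Ico_subset_Icc_self hn)
  -- `T` lies in no piece; reach it along `p n → T`.
  · have hpmem : ∀ n, p n ∈ Icc a t := fun n =>
      hpa ▸ hp.Icc_subset_Icc_zero_of_tendsto hpT n n (left_mem_Icc.2 le_rfl)
    have hlim : Tendsto (g ∘ p) atTop (𝓝 (g t)) :=
      (hg t ⟨hat, le_rfl⟩).tendsto.comp <| tendsto_nhdsWithin_iff.2 ⟨hpT, .of_forall hpmem⟩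
    exact le_of_tendsto' hlim fun n => hpieces n (p n) (left_mem_Icc.2 (hp n.le_succ))

theorem IsCompact.le_ciSup_of_continuousOn {X : Type*} [TopologicalSpace X] {s : Set X}
    (hs : IsCompact s) {g : X → ℝ} (hg : ContinuousOn g s) {x : X} (hx : x ∈ s) :
    g x ≤ ⨆ y : s, g y :=
  le_ciSup (f := fun y : s => g y) (by simpa [image_eq_range] using hs.bddAbove_image hg)
    ⟨x, hx⟩

theorem stmt_7_general
    (a T : ℝ) (haT : a < T)
    (p : ℕ → ℝ) (hp : StrictMono p) (hpa : p 0 = a)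
    (hpT : Tendsto p atTop (nhds T))
    (ζ ξ : ℕ → ℝ → ℝ)
    (hξ : ∀ n, ∀ y ∈ Icc (p n) (p (n + 1)), ξ n y ∈ Icc a T ∧ ζ n (ξ n y) = y)
    (α : ℝ) (hα : |α| < 1)
    (B : ℝ → NonemptyCompacts ℝ)
    (Φ Ψ Φα Ψα : ℝ → NonemptyCompacts ℝ)
    (hΦ : ContinuousOn Φ (Icc a T)) (hΨ : ContinuousOn Ψ (Icc a T))
    (hΦα : ContinuousOn Φα (Icc a T)) (hΨα : ContinuousOn Ψα (Icc a T))
    (hΦαeq : ∀ n, ∀ t ∈ Icc (p n) (p (n + 1)),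
      (Φα t : Set ℝ) = (Φ t : Set ℝ) + α • ((Φα (ξ n t) : Set ℝ) - (B (ξ n t) : Set ℝ)))
    (hΨαeq : ∀ n, ∀ t ∈ Icc (p n) (p (n + 1)),
      (Ψα t : Set ℝ) = (Ψ t : Set ℝ) + α • ((Ψα (ξ n t) : Set ℝ) - (B (ξ n t) : Set ℝ))) :
    ⨆ t : ↥(Icc a T), dist (Φα ↑t) (Ψα ↑t) ≤
      (1 - |α|)⁻¹ * ⨆ t : ↥(Icc a T), dist (Φ ↑t) (Ψ ↑t) := by
  set S := ⨆ t : ↥(Icc a T), dist (Φα ↑t) (Ψα ↑t)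
  set M := ⨆ t : ↥(Icc a T), dist (Φ ↑t) (Ψ ↑t)
  have hΦαΨα : ContinuousOn (fun t => dist (Φα t) (Ψα t)) (Icc a T) :=
    continuous_dist.comp_continuousOn (hΦα.prodMk hΨα)
  have hΦΨ : ContinuousOn (fun t => dist (Φ t) (Ψ t)) (Icc a T) :=
    continuous_dist.comp_continuousOn (hΦ.prodMk hΨ)
  have hpieces : ∀ n, ∀ t ∈ Icc (p n) (p (n + 1)), dist (Φα t) (Ψα t) ≤ M + |α| * S := by
    intro n t ht
    have htI : t ∈ Icc a T := hpa ▸ hp.monotone.Icc_subset_Icc_zero_of_tendsto hpT n (n + 1) ht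
    calc dist (Φα t) (Ψα t) ≤ dist (Φ t) (Ψ t) + ‖α‖ * dist (Φα (ξ n t)) (Ψα (ξ n t)) :=
          NonemptyCompacts.dist_le_of_coe_eq_add_smul_sub (hΦαeq n t ht) (hΨαeq n t ht)
      _ ≤ M + |α| * S := by
          rw [Real.norm_eq_abs]
          gcongr
          · exact isCompact_Icc.le_ciSup_of_continuousOn hΦΨ htI
          · exact isCompact_Icc.le_ciSup_of_continuousOn hΦαΨα (hξ n t ht).1
  have : Nonempty (Icc a T) := (nonempty_Icc.2 haT.le).to_subtype
  have hS : S ≤ M + |α| * S :=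
    ciSup_le fun t => le_of_forall_mem_Icc_succ hp.monotone hpa hpT hΦαΨα hpieces t t.2
  rw [inv_mul_eq_div, le_div_iff₀ (by linarith)]
  linarith

/-- The α-countable fractal operator `Φ ↦ Φ^α` is Lipschitz with constant `1/(1−|α|)`
for the uniform Hausdorff metric; in particular it is continuous.  Here `Φα`, `Ψα` are
the fractal functions of `Φ`, `Ψ` (with the same partition, maps `ζ n` with inverses
`ξ n`, base function `B` and scaling factor `α`). -/
theorem stmt_7
    (a T : ℝ) (haT : a < T)
    (p : ℕ → ℝ) (hp : StrictMono p) (hpa : p 0 = a)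
    (hpT : Tendsto p atTop (nhds T))
    (ζ ξ : ℕ → ℝ → ℝ) (c : ℕ → ℝ) (hc : ∀ n, c n < 1)
    (hζlip : ∀ n, ∀ x ∈ Icc a T, ∀ y ∈ Icc a T, |ζ n x - ζ n y| ≤ c n * |x - y|)
    (hζcont : ∀ n, ContinuousOn (ζ n) (Icc a T))
    (hζinj : ∀ n, InjOn (ζ n) (Icc a T))
    (hζim : ∀ n, ζ n '' Icc a T = Icc (p n) (p (n + 1)))
    (hζend : ∀ n, (ζ n a = p n ∧ ζ n T = p (n + 1)) ∨ (ζ n a = p (n + 1) ∧ ζ n T = p n))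
    (hξ : ∀ n, ∀ y ∈ Icc (p n) (p (n + 1)), ξ n y ∈ Icc a T ∧ ζ n (ξ n y) = y)
    (α : ℝ) (hα : |α| < 1)
    (B : ℝ → NonemptyCompacts ℝ) (hB : ContinuousOn B (Icc a T))
    (Φ Ψ Φα Ψα : ℝ → NonemptyCompacts ℝ)
    (hΦ : ContinuousOn Φ (Icc a T)) (hΨ : ContinuousOn Ψ (Icc a T))
    (hΦα : ContinuousOn Φα (Icc a T)) (hΨα : ContinuousOn Ψα (Icc a T))
    (hΦαeq : ∀ n, ∀ t ∈ Icc (p n) (p (n + 1)),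
      (Φα t : Set ℝ) = (Φ t : Set ℝ) + α • ((Φα (ξ n t) : Set ℝ) - (B (ξ n t) : Set ℝ)))
    (hΨαeq : ∀ n, ∀ t ∈ Icc (p n) (p (n + 1)),
      (Ψα t : Set ℝ) = (Ψ t : Set ℝ) + α • ((Ψα (ξ n t) : Set ℝ) - (B (ξ n t) : Set ℝ))) :
    ⨆ t : ↥(Icc a T), dist (Φα ↑t) (Ψα ↑t) ≤
      (1 - |α|)⁻¹ * ⨆ t : ↥(Icc a T), dist (Φ ↑t) (Ψ ↑t) :=
  stmt_7_general a T haT p hp hpa hpT ζ ξ hξ α hα B Φ Ψ Φα Ψα hΦ hΨ hΦα hΨα hΦαeq hΨαeq
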